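/- arXiv:1404.0416 — 3 statements merged into one kernel-verified Lean document; each statement's English description precedes it below -/
import Mathlib

section
/- Let Ω ⊆ ℂ ≅ ℝ² be open, and let ψ₁, ψ₂, ψ₃ : Ω → ℂ be differentiable functions with ψ₃² = ψ₁² + ψ₂² on Ω. Let C^c_{ab} be real numbers with C^c_{ab} = −C^c_{ba}, let ε₁ = ε₂ = 1, ε₃ = −1, and L^c_{ab} = C^c_{ab} − C^a_{bc} ε_a ε_c − C^b_{ac} ε_b ε_c. If ∂ψ_c/∂z̄ + (1/2) Σ_{a,b=1}^{3} L^c_{ab} conj(ψ_a) ψ_b = 0 holds on Ω for c = 1 and c = 2, then ψ₃ · (∂ψ₃/∂z̄ + (1/2) Σ_{a,b=1}^{3} L^3_{ab} conj(ψ_a) ψ_b) = 0 on Ω; in particular, at every point where ψ₃ ≠ 0, the equation ∂ψ₃/∂z̄ + (1/2) Σ_{a,b} L^3_{ab} conj(ψ_a) ψ_b = 0 also holds. -/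
/-!
Write `ε = (1, 1, -1)` and `E_c = ∂ψ_c/∂z̄ + ½ ∑ L^c_{ab} conj(ψ_a) ψ_b`. The hypothesis says
`∑ ε_c ψ_c² = 0`, and applying `∂/∂z̄` gives `∑ ε_c ψ_c ∂ψ_c/∂z̄ = 0`. The connection terms satisfy
the same relation, `∑_c ε_c ψ_c ∑_{ab} L^c_{ab} conj(ψ_a) ψ_b = 0`, because `ε_c L^c_{ab}` is
antisymmetric in `c` and `b` (the connection is metric). Hence `∑ ε_c ψ_c E_c = 0`, and
`E₁ = E₂ = 0` leaves `ψ₃ E₃ = 0`.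
-/

open Complex

/-- The Wirtinger operator ∂/∂z̄ = (1/2)(∂/∂u + i ∂/∂v) for a map ψ : ℝ² → ℂ. -/
noncomputable def dzbarC (ψ : ℝ × ℝ → ℂ) (p : ℝ × ℝ) : ℂ :=
  (1 / 2) * (fderiv ℝ ψ p (1, 0) + Complex.I * fderiv ℝ ψ p (0, 1))

open Filter Topology

section Wirtinger

variable {f : ℝ × ℝ → ℂ} {p : ℝ × ℝ}

lemma dzbarC_congr_of_eventuallyEq {g : ℝ × ℝ → ℂ} (h : f =ᶠ[𝓝 p] g) :
    dzbarC f p = dzbarC g p := by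
  simp only [dzbarC, h.fderiv_eq]

lemma dzbarC_zero : dzbarC (fun _ => 0) p = 0 := by
  simp [dzbarC]

lemma dzbarC_sum {ι : Type*} (s : Finset ι) {g : ι → ℝ × ℝ → ℂ}
    (hg : ∀ i ∈ s, DifferentiableAt ℝ (g i) p) :
    dzbarC (fun q => ∑ i ∈ s, g i q) p = ∑ i ∈ s, dzbarC (g i) p := by
  simp only [dzbarC, ← Finset.sum_fn, fderiv_sum hg, sum_apply, Finset.mul_sum, ← Finset.sum_add_distrib]

lemma dzbarC_const_mul (k : ℂ) (hf : DifferentiableAt ℝ f p) :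
    dzbarC (fun q => k * f q) p = k * dzbarC f p := by
  simp only [dzbarC, fderiv_const_mul hf, smul_apply, smul_eq_mul]
  ring

lemma dzbarC_sq (hf : DifferentiableAt ℝ f p) :
    dzbarC (fun q => f q ^ 2) p = 2 * f p * dzbarC f p := by
  have hfun : (fun q => f q ^ 2) = f ^ 2 := rfl
  simp only [dzbarC, hfun, fderiv_pow 2 hf, smul_apply, smul_eq_mul]
  push_cast
  ring

lemma sum_mul_dzbarC_eq_zero {ι : Type*} [Fintype ι] (k : ι → ℂ) {ψ : ι → ℝ × ℝ → ℂ}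
    (hψ : ∀ c, DifferentiableAt ℝ (ψ c) p) (h : ∀ᶠ q in 𝓝 p, ∑ c, k c * ψ c q ^ 2 = 0) :
    ∑ c, k c * ψ c p * dzbarC (ψ c) p = 0 := by
  have hdiff : ∀ c, DifferentiableAt ℝ (fun q => k c * ψ c q ^ 2) p := fun c =>
    ((hψ c).pow 2).const_mul (k c)
  have htwice : 2 * ∑ c, k c * ψ c p * dzbarC (ψ c) p = 0 := calc
    2 * ∑ c, k c * ψ c p * dzbarC (ψ c) p
        = ∑ c, dzbarC (fun q => k c * ψ c q ^ 2) p := by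
        rw [Finset.mul_sum]
        refine Finset.sum_congr rfl fun c _ => ?_
        rw [dzbarC_const_mul (f := fun q => ψ c q ^ 2) _ ((hψ c).pow 2), dzbarC_sq (hψ c)]
        ring
    _ = dzbarC (fun q => ∑ c, k c * ψ c q ^ 2) p := (dzbarC_sum _ fun c _ => hdiff c).symm
    _ = 0 := by rw [dzbarC_congr_of_eventuallyEq h, dzbarC_zero]
  exact (mul_eq_zero.mp htwice).resolve_left two_ne_zero

end Wirtinger

section Connection

variable {ι : Type*}

lemma sum_sum_mul_mul_eq_zero_of_antisymm [Fintype ι] {R : Type*} [CommRing R] [IsAddTorsionFree R]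
    (K : ι → ι → R) (hK : ∀ b c, K b c = -K c b) (w : ι → R) :
    ∑ b, ∑ c, K b c * w b * w c = 0 := by
  refine self_eq_neg.mp ?_
  calc ∑ b, ∑ c, K b c * w b * w c
      = ∑ c, ∑ b, K b c * w b * w c := Finset.sum_comm
    _ = ∑ c, ∑ b, -(K c b * w c * w b) :=
        Finset.sum_congr rfl fun c _ => Finset.sum_congr rfl fun b _ => by rw [hK b c]; ring
    _ = -∑ c, ∑ b, K c b * w c * w b := by simp only [Finset.sum_neg_distrib]

variable {C : ι → ι → ι → ℝ} {ε : ι → ℝ} {L : ι → ι → ι → ℝ}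

lemma signature_mul_connection_antisymm (hC : ∀ c a b, C c a b = -C c b a)
    (hε : ∀ a, ε a ^ 2 = 1)
    (hL : ∀ c a b, L c a b = C c a b - C a b c * ε a * ε c - C b a c * ε b * ε c) (a b c : ι) :
    ε c * L c a b = -(ε b * L b a c) := by
  rw [hL c a b, hL b a c]
  linear_combination (-ε a * C a b c - ε b * C b a c) * hε c
    + (-ε a * C a c b - ε c * C c a b) * hε b - ε a * hC a b c

lemma sum_signature_mul_connection_eq_zero [Fintype ι] (hC : ∀ c a b, C c a b = -C c b a)
    (hε : ∀ a, ε a ^ 2 = 1)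
    (hL : ∀ c a b, L c a b = C c a b - C a b c * ε a * ε c - C b a c * ε b * ε c) (u w : ι → ℂ) :
    ∑ c, (ε c : ℂ) * w c * ∑ a, ∑ b, (L c a b : ℂ) * u a * w b = 0 := by
  have hanti : ∀ a b c, ((ε c * L c a b : ℝ) : ℂ) = -((ε b * L b a c : ℝ) : ℂ) := fun a b c => by
    rw [signature_mul_connection_antisymm hC hε hL a b c, ofReal_neg]
  calc ∑ c, (ε c : ℂ) * w c * ∑ a, ∑ b, (L c a b : ℂ) * u a * w b
      = ∑ a, u a * ∑ c, ∑ b, ((ε c * L c a b : ℝ) : ℂ) * w c * w b := by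
        simp only [Finset.mul_sum]
        rw [Finset.sum_comm]
        refine Finset.sum_congr rfl fun _ _ => Finset.sum_congr rfl fun _ _ =>
          Finset.sum_congr rfl fun _ _ => ?_
        push_cast
        ring
    _ = 0 := Finset.sum_eq_zero fun a _ => by
        rw [sum_sum_mul_mul_eq_zero_of_antisymm _ (fun c b => hanti a b c), mul_zero]

end Connection

/-- The left-hand side `E_c` of the `c`-th equation. -/
noncomputable def dzbarConn {ι : Type*} [Fintype ι] (L : ι → ι → ι → ℝ) (ψ : ι → ℝ × ℝ → ℂ)
    (c : ι) (p : ℝ × ℝ) : ℂ :=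
  dzbarC (ψ c) p + (1 / 2) * ∑ a, ∑ b, (L c a b : ℂ) * (starRingEnd ℂ) (ψ a p) * ψ b p

lemma sum_signature_mul_dzbarConn_eq_zero {ι : Type*} [Fintype ι] {C : ι → ι → ι → ℝ}
    {ε : ι → ℝ} {L : ι → ι → ι → ℝ} (hC : ∀ c a b, C c a b = -C c b a)
    (hε : ∀ a, ε a ^ 2 = 1)
    (hL : ∀ c a b, L c a b = C c a b - C a b c * ε a * ε c - C b a c * ε b * ε c)
    {ψ : ι → ℝ × ℝ → ℂ} {p : ℝ × ℝ} (hψ : ∀ c, DifferentiableAt ℝ (ψ c) p)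
    (hnull : ∀ᶠ q in 𝓝 p, ∑ c, (ε c : ℂ) * ψ c q ^ 2 = 0) :
    ∑ c, (ε c : ℂ) * ψ c p * dzbarConn L ψ c p = 0 := by
  have hderiv := sum_mul_dzbarC_eq_zero (fun c => (ε c : ℂ)) hψ hnull
  have halg : ∑ c, (ε c : ℂ) * ψ c p *
      ∑ a, ∑ b, (L c a b : ℂ) * (starRingEnd ℂ) (ψ a p) * ψ b p = 0 :=
    sum_signature_mul_connection_eq_zero hC hε hL _ _
  calc ∑ c, (ε c : ℂ) * ψ c p * dzbarConn L ψ c p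
      = ∑ c, (ε c : ℂ) * ψ c p * dzbarC (ψ c) p + (1 / 2) * ∑ c, (ε c : ℂ) * ψ c p *
          ∑ a, ∑ b, (L c a b : ℂ) * (starRingEnd ℂ) (ψ a p) * ψ b p := by
        rw [Finset.mul_sum, ← Finset.sum_add_distrib]
        exact Finset.sum_congr rfl fun c _ => by unfold dzbarConn; ring
    _ = 0 := by rw [hderiv, halg]; ring

/-- Indices are shifted from `{1, 2, 3}` to `{0, 1, 2}`. -/
theorem lemma_third_equation_complex
    (Ω : Set (ℝ × ℝ)) (hΩ : IsOpen Ω)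
    (ψ : Fin 3 → (ℝ × ℝ → ℂ))
    (hdiff : ∀ a, DifferentiableOn ℝ (ψ a) Ω)
    (hsq : ∀ p ∈ Ω, ψ 2 p ^ 2 = ψ 0 p ^ 2 + ψ 1 p ^ 2)
    (C : Fin 3 → Fin 3 → Fin 3 → ℝ)
    (hC : ∀ c a b, C c a b = -C c b a)
    (ε : Fin 3 → ℝ) (hε : ε = ![1, 1, -1])
    (L : Fin 3 → Fin 3 → Fin 3 → ℝ)
    (hL : ∀ c a b, L c a b = C c a b - C a b c * ε a * ε c - C b a c * ε b * ε c)
    (heq : ∀ c : Fin 3, c = 0 ∨ c = 1 → ∀ p ∈ Ω,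
      dzbarC (ψ c) p + (1 / 2) * ∑ a : Fin 3, ∑ b : Fin 3,
        (L c a b : ℂ) * (starRingEnd ℂ) (ψ a p) * ψ b p = 0) :
    ∀ p ∈ Ω,
      ψ 2 p * (dzbarC (ψ 2) p + (1 / 2) * ∑ a : Fin 3, ∑ b : Fin 3,
        (L 2 a b : ℂ) * (starRingEnd ℂ) (ψ a p) * ψ b p) = 0 ∧
      (ψ 2 p ≠ 0 →
        dzbarC (ψ 2) p + (1 / 2) * ∑ a : Fin 3, ∑ b : Fin 3,
          (L 2 a b : ℂ) * (starRingEnd ℂ) (ψ a p) * ψ b p = 0) := by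
  intro p hp
  have hεsq : ∀ a, ε a ^ 2 = 1 := by subst hε; intro a; fin_cases a <;> norm_num
  have hε2 : ε 2 = -1 := by rw [hε]; rfl
  have hψ : ∀ c, DifferentiableAt ℝ (ψ c) p := fun c =>
    (hdiff c).differentiableAt (hΩ.mem_nhds hp)
  have hnull : ∀ᶠ q in 𝓝 p, ∑ c, (ε c : ℂ) * ψ c q ^ 2 = 0 := by
    filter_upwards [hΩ.mem_nhds hp] with q hq
    simp [Fin.sum_univ_three, hε, hsq q hq]
  have h0 : dzbarConn L ψ 0 p = 0 := heq 0 (Or.inl rfl) p hp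
  have h1 : dzbarConn L ψ 1 p = 0 := heq 1 (Or.inr rfl) p hp
  have hrel := sum_signature_mul_dzbarConn_eq_zero hC hεsq hL hψ hnull
  have hmain : ψ 2 p * dzbarConn L ψ 2 p = 0 := by
    simp only [Fin.sum_univ_three, h0, h1, hε2, ofReal_neg, ofReal_one] at hrel
    linear_combination -hrel
  exact ⟨hmain, fun hne => (mul_eq_zero.mp hmain).resolve_left hne⟩
end

section
/- Define f : ℝ² → ℝ³ by f(u,v) = e^{−v}((1/√2) sinh u, (1/√2) sinh u, cosh u); note the third component is always positive, so f maps into the half-space x₃ > 0. Then, with g the de Sitter metric: g_{f(u,v)}(f_u, f_u) = 1/cosh²u, g_{f(u,v)}(f_v, f_v) = −1/cosh²u, and g_{f(u,v)}(f_u, f_v) = 0 for all (u,v), so f is a conformal timelike immersion; moreover f(u,0) = ((1/√2) sinh u, (1/√2) sinh u, cosh u). -/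
/-!
The surface is the warped product `f(u,v) = e^{-v} • γ(u)` of the curve
`γ(u) = (sinh u/√2, sinh u/√2, cosh u)`, so `f_u = e^{-v} • γ'(u)` and `f_v = -e^{-v} • γ(u)`.
Homotheties of the half-space are isometries of `g`, so all three products reduce to
`g_γ(γ', γ') = 1/cosh² u`, `g_γ(γ, γ) = -1/cosh² u` (both by `cosh² - sinh² = 1`) and
`g_γ(γ', γ) = 0`.
-/

noncomputable def gS (p X Y : ℝ × ℝ × ℝ) : ℝ :=
  (X.1 * Y.1 + X.2.1 * Y.2.1 - X.2.2 * Y.2.2) / p.2.2 ^ 2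

open Real

theorem gS_smul (a b c : ℝ) (p X Y : ℝ × ℝ × ℝ) :
    gS (a • p) (b • X) (c • Y) = b * c / a ^ 2 * gS p X Y := by
  simp only [gS, Prod.smul_fst, Prod.smul_snd, smul_eq_mul]
  by_cases ha : a = 0
  · simp [ha]
  · field_simp

section WarpedProduct

variable {E : Type*} [NormedAddCommGroup E] [NormedSpace ℝ E]
  {φ : ℝ → ℝ} {γ : ℝ → E} {φ' : ℝ} {γ' : E} {u v : ℝ}

theorem hasFDerivAt_smul_comp_snd_fst (hφ : HasDerivAt φ φ' v) (hγ : HasDerivAt γ γ' u) :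
    HasFDerivAt (fun p : ℝ × ℝ => φ p.2 • γ p.1)
      (φ v • (ContinuousLinearMap.fst ℝ ℝ ℝ).smulRight γ'
        + (ContinuousLinearMap.snd ℝ ℝ ℝ).smulRight (φ' • γ u)) (u, v) := by
  have hφ₂ : HasFDerivAt (fun p : ℝ × ℝ => φ p.2) (φ' • ContinuousLinearMap.snd ℝ ℝ ℝ) (u, v) :=
    hφ.comp_hasFDerivAt (u, v) hasFDerivAt_snd
  have hγ₁ : HasFDerivAt (fun p : ℝ × ℝ => γ p.1)
      ((ContinuousLinearMap.toSpanSingleton ℝ γ').comp (ContinuousLinearMap.fst ℝ ℝ ℝ)) (u, v) :=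
    hγ.hasFDerivAt.comp (u, v) hasFDerivAt_fst
  refine (hφ₂.smul hγ₁).congr_fderiv ?_
  ext <;> simp

theorem fderiv_smul_comp_snd_fst_apply_one_zero (hφ : HasDerivAt φ φ' v)
    (hγ : HasDerivAt γ γ' u) :
    fderiv ℝ (fun p : ℝ × ℝ => φ p.2 • γ p.1) (u, v) (1, 0) = φ v • γ' := by
  simp [(hasFDerivAt_smul_comp_snd_fst hφ hγ).fderiv]

theorem fderiv_smul_comp_snd_fst_apply_zero_one (hφ : HasDerivAt φ φ' v)
    (hγ : HasDerivAt γ γ' u) :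
    fderiv ℝ (fun p : ℝ × ℝ => φ p.2 • γ p.1) (u, v) (0, 1) = φ' • γ u := by
  simp [(hasFDerivAt_smul_comp_snd_fst hφ hγ).fderiv]

end WarpedProduct

noncomputable def deSitterCurve (u : ℝ) : ℝ × ℝ × ℝ :=
  (sinh u / √2, sinh u / √2, cosh u)

noncomputable def deSitterCurveDeriv (u : ℝ) : ℝ × ℝ × ℝ :=
  (cosh u / √2, cosh u / √2, sinh u)

theorem hasDerivAt_deSitterCurve (u : ℝ) :
    HasDerivAt deSitterCurve (deSitterCurveDeriv u) u :=
  ((hasDerivAt_sinh u).div_const _).prodMk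
    (((hasDerivAt_sinh u).div_const _).prodMk (hasDerivAt_cosh u))

theorem div_sqrt_two_mul_div_sqrt_two (a b : ℝ) : a / √2 * (b / √2) = a * b / 2 := by
  rw [div_mul_div_comm, mul_self_sqrt zero_le_two]

theorem gS_deSitterCurveDeriv (u : ℝ) :
    gS (deSitterCurve u) (deSitterCurveDeriv u) (deSitterCurveDeriv u) = 1 / cosh u ^ 2 := by
  simp only [gS, deSitterCurve, deSitterCurveDeriv, div_sqrt_two_mul_div_sqrt_two]
  field_simp
  linear_combination 2 * cosh_sq_sub_sinh_sq u

theorem gS_deSitterCurve (u : ℝ) :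
    gS (deSitterCurve u) (deSitterCurve u) (deSitterCurve u) = -(1 / cosh u ^ 2) := by
  simp only [gS, deSitterCurve, div_sqrt_two_mul_div_sqrt_two]
  field_simp
  linear_combination -2 * cosh_sq_sub_sinh_sq u

theorem gS_deSitterCurveDeriv_deSitterCurve (u : ℝ) :
    gS (deSitterCurve u) (deSitterCurveDeriv u) (deSitterCurve u) = 0 := by
  simp only [gS, deSitterCurve, deSitterCurveDeriv, div_sqrt_two_mul_div_sqrt_two]
  ring

/-- The surface f(u,v) = e^{−v}((1/√2) sinh u, (1/√2) sinh u, cosh u) maps into the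
half-space x₃ > 0 and is a conformal timelike immersion in the de Sitter space:
g(f_u,f_u) = 1/cosh²u, g(f_v,f_v) = −1/cosh²u, g(f_u,f_v) = 0; and
f(u,0) = ((1/√2) sinh u, (1/√2) sinh u, cosh u). -/
theorem deSitter_second_example
    (f : ℝ × ℝ → ℝ × ℝ × ℝ)
    (hf : ∀ p : ℝ × ℝ, f p =
      (Real.exp (-p.2) * (Real.sinh p.1 / Real.sqrt 2),
       Real.exp (-p.2) * (Real.sinh p.1 / Real.sqrt 2),
       Real.exp (-p.2) * Real.cosh p.1)) :
    (∀ p : ℝ × ℝ, 0 < (f p).2.2) ∧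
    (∀ p : ℝ × ℝ,
      gS (f p) (fderiv ℝ f p (1, 0)) (fderiv ℝ f p (1, 0)) = 1 / Real.cosh p.1 ^ 2 ∧
      gS (f p) (fderiv ℝ f p (0, 1)) (fderiv ℝ f p (0, 1)) = -(1 / Real.cosh p.1 ^ 2) ∧
      gS (f p) (fderiv ℝ f p (1, 0)) (fderiv ℝ f p (0, 1)) = 0) ∧
    (∀ u : ℝ, f (u, 0) =
      (Real.sinh u / Real.sqrt 2, Real.sinh u / Real.sqrt 2, Real.cosh u)) := by
  have hf' : f = fun p : ℝ × ℝ => exp (-p.2) • deSitterCurve p.1 := funext hf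
  subst hf'
  refine ⟨fun p => ?_, fun ⟨u, v⟩ => ?_, fun u => by simp [deSitterCurve]⟩
  · simp only [deSitterCurve, Prod.smul_mk, smul_eq_mul]
    positivity
  have hexp : HasDerivAt (fun t => exp (-t)) (-exp (-v)) v := by
    simpa using (hasDerivAt_neg v).exp
  rw [fderiv_smul_comp_snd_fst_apply_one_zero hexp (hasDerivAt_deSitterCurve u),
    fderiv_smul_comp_snd_fst_apply_zero_one hexp (hasDerivAt_deSitterCurve u),
    gS_smul, gS_smul, gS_smul, gS_deSitterCurveDeriv, gS_deSitterCurve,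
    gS_deSitterCurveDeriv_deSitterCurve]
  have he : exp (-v) ≠ 0 := (exp_pos _).ne'
  exact ⟨by field_simp, by field_simp, mul_zero _⟩
end

section
/- Let Ω = {(u,v) ∈ ℝ² : 0 < u < π} and define complex-valued functions ψ₁(u,v) = −(sin u + i cos u)/(2 sin u), ψ₂(u,v) = (cos u − i sin u)/(2 sin u), ψ₃(u,v) = 0. Then: (1) they satisfy the ℍ²×ℝ Weierstrass system ∂ψ₁/∂z̄ − conj(ψ₁)ψ₂ = 0 and ∂ψ₂/∂z̄ + conj(ψ₁)ψ₁ = 0 on Ω; (2) ψ₁² + ψ₂² − ψ₃² = 0 on Ω; (3) |ψ₁|² + |ψ₂|² − |ψ₃|² = 1/(2 sin²u) ≠ 0 on Ω. -/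
open Complex

/-! The data depend on `u` alone, through `f u = -1/2 - (i/2) cot u`, and `ψ₂ = i ψ₁`.
Hence `ψ₁² + ψ₂² = (1 + i²) ψ₁² = 0` and `|ψ₁|² = |ψ₂|² = 1/(4 sin² u)`, while
`∂ψ₁/∂z̄ = f'/2 = i/(4 sin² u) = i |ψ₁|² = conj ψ₁ · ψ₂` and
`∂ψ₂/∂z̄ = i ∂ψ₁/∂z̄ = -|ψ₁|²`. -/

lemma dzbarC_comp_fst {g : ℝ → ℂ} {d : ℂ} {p : ℝ × ℝ} (hg : HasDerivAt g d p.1) :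
    dzbarC (fun q : ℝ × ℝ => g q.1) p = d / 2 := by
  have h : HasFDerivAt (fun q : ℝ × ℝ => g q.1)
      ((ContinuousLinearMap.smulRight (1 : ℝ →L[ℝ] ℝ) d).comp
        (ContinuousLinearMap.fst ℝ ℝ ℝ)) p :=
    hg.hasFDerivAt.comp p hasFDerivAt_fst
  rw [dzbarC, h.fderiv]
  simp only [ContinuousLinearMap.coe_comp, Function.comp_apply,
    ContinuousLinearMap.coe_fst', ContinuousLinearMap.smulRight_apply,
    one_apply_eq_self, one_smul, zero_smul, mul_zero, add_zero]
  ring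

noncomputable def horizontalPlaneProfile (t : ℝ) : ℂ :=
  -((Real.sin t : ℂ) + I * (Real.cos t : ℂ)) / (2 * (Real.sin t : ℂ))

lemma I_mul_horizontalPlaneProfile (t : ℝ) :
    I * horizontalPlaneProfile t =
      ((Real.cos t : ℂ) - I * (Real.sin t : ℂ)) / (2 * (Real.sin t : ℂ)) := by
  rw [horizontalPlaneProfile]
  linear_combination (-(Real.cos t : ℂ) / (2 * (Real.sin t : ℂ))) * I_sq

lemma hasDerivAt_horizontalPlaneProfile {t : ℝ} (ht : Real.sin t ≠ 0) :
    HasDerivAt horizontalPlaneProfile (I / (2 * (Real.sin t : ℂ) ^ 2)) t := by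
  have hsin : HasDerivAt (fun x : ℝ => (Real.sin x : ℂ)) (Real.cos t) t :=
    (Real.hasDerivAt_sin t).ofReal_comp
  have hcos : HasDerivAt (fun x : ℝ => (Real.cos x : ℂ)) (-(Real.sin t : ℂ)) t := by
    simpa using (Real.hasDerivAt_cos t).ofReal_comp
  have pyth : (Real.sin t : ℂ) ^ 2 + (Real.cos t : ℂ) ^ 2 = 1 := by
    exact_mod_cast Real.sin_sq_add_cos_sq t
  have hsC : (Real.sin t : ℂ) ≠ 0 := ofReal_ne_zero.mpr ht
  refine (((hsin.add (hcos.const_mul I)).neg).div (hsin.const_mul 2)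
    (mul_ne_zero two_ne_zero hsC)).congr_deriv ?_
  field_simp
  simp only [Pi.neg_apply, Pi.add_apply]
  linear_combination I * pyth

lemma normSq_horizontalPlaneProfile (t : ℝ) :
    normSq (horizontalPlaneProfile t) = 1 / (4 * Real.sin t ^ 2) := by
  have hnum : -((Real.sin t : ℂ) + I * (Real.cos t : ℂ)) =
      ((-Real.sin t : ℝ) : ℂ) + ((-Real.cos t : ℝ) : ℂ) * I := by
    push_cast; ring
  have hden : (2 : ℂ) * (Real.sin t : ℂ) = ((2 * Real.sin t : ℝ) : ℂ) := by push_cast; ring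
  rw [horizontalPlaneProfile, normSq_div, hnum, hden, normSq_add_mul_I, normSq_ofReal,
    neg_sq, neg_sq, Real.sin_sq_add_cos_sq]
  ring

lemma conj_mul_horizontalPlaneProfile (t : ℝ) :
    (starRingEnd ℂ) (horizontalPlaneProfile t) * horizontalPlaneProfile t =
      1 / (4 * (Real.sin t : ℂ) ^ 2) := by
  rw [← normSq_eq_conj_mul_self, normSq_horizontalPlaneProfile]
  push_cast
  rfl

/-- On Ω = {0 < u < π}, the Weierstrass data ψ₁ = −(sin u + i cos u)/(2 sin u),
ψ₂ = (cos u − i sin u)/(2 sin u), ψ₃ = 0 satisfies the ℍ²×ℝ system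
∂ψ₁/∂z̄ − conj(ψ₁)ψ₂ = 0, ∂ψ₂/∂z̄ + conj(ψ₁)ψ₁ = 0, the condition
ψ₁² + ψ₂² − ψ₃² = 0, and |ψ₁|² + |ψ₂|² − |ψ₃|² = 1/(2 sin²u) ≠ 0. -/
theorem H2xR_horizontal_plane_data
    (Ω : Set (ℝ × ℝ)) (hΩ : Ω = {p : ℝ × ℝ | 0 < p.1 ∧ p.1 < Real.pi})
    (ψ₁ ψ₂ ψ₃ : ℝ × ℝ → ℂ)
    (hψ₁ : ∀ p : ℝ × ℝ, ψ₁ p =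
      -((Real.sin p.1 : ℂ) + Complex.I * (Real.cos p.1 : ℂ)) / (2 * (Real.sin p.1 : ℂ)))
    (hψ₂ : ∀ p : ℝ × ℝ, ψ₂ p =
      ((Real.cos p.1 : ℂ) - Complex.I * (Real.sin p.1 : ℂ)) / (2 * (Real.sin p.1 : ℂ)))
    (hψ₃ : ∀ p : ℝ × ℝ, ψ₃ p = 0) :
    (∀ p ∈ Ω, dzbarC ψ₁ p - (starRingEnd ℂ) (ψ₁ p) * ψ₂ p = 0 ∧
      dzbarC ψ₂ p + (starRingEnd ℂ) (ψ₁ p) * ψ₁ p = 0) ∧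
    (∀ p ∈ Ω, ψ₁ p ^ 2 + ψ₂ p ^ 2 - ψ₃ p ^ 2 = 0) ∧
    (∀ p ∈ Ω,
      Complex.normSq (ψ₁ p) + Complex.normSq (ψ₂ p) - Complex.normSq (ψ₃ p) =
        1 / (2 * Real.sin p.1 ^ 2) ∧
      1 / (2 * Real.sin p.1 ^ 2) ≠ 0) := by
  obtain rfl : ψ₁ = fun q => horizontalPlaneProfile q.1 := funext hψ₁
  obtain rfl : ψ₂ = fun q => I * horizontalPlaneProfile q.1 :=
    funext fun q => (hψ₂ q).trans (I_mul_horizontalPlaneProfile q.1).symm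
  obtain rfl : ψ₃ = fun _ => 0 := funext hψ₃
  have hsin : ∀ p ∈ Ω, Real.sin p.1 ≠ 0 := fun p hp => by
    rw [hΩ] at hp
    exact (Real.sin_pos_of_pos_of_lt_pi hp.1 hp.2).ne'
  refine ⟨fun p hp => ?_, fun p _ => ?_, fun p hp => ⟨?_, by have := hsin p hp; positivity⟩⟩
  · have hd := hasDerivAt_horizontalPlaneProfile (hsin p hp)
    rw [dzbarC_comp_fst hd, dzbarC_comp_fst (hd.const_mul I), mul_left_comm,
      conj_mul_horizontalPlaneProfile]
    constructor
    · ring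
    · linear_combination (1 / (4 * (Real.sin p.1 : ℂ) ^ 2)) * I_sq
  · linear_combination horizontalPlaneProfile p.1 ^ 2 * I_sq
  · simp only [normSq_mul, normSq_I, normSq_zero, normSq_horizontalPlaneProfile]
    ring
end
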